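/- arXiv:1007.1412 — 7 statements merged into one kernel-verified Lean document; each statement's English description precedes it below -/
import Mathlib

section
/- Let Γ be an icc group acting on an infinite set I, and suppose there exists κ ∈ ℕ such that for every finite subset J ⊆ I with |J| ≥ κ the stabilizer Stab J = {g ∈ Γ : g·i = i for all i ∈ J} is finite. Then for every g ∈ Γ with g ≠ e, the set {i ∈ I : g·i ≠ i} of points moved by g is infinite. -/
/-- If an icc group `Γ` acts on an infinite set `I` such that the pointwise stabilizer of
every finite subset `J ⊆ I` with `|J| ≥ κ` is finite, then every non-identity element of `Γ`
moves infinitely many points of `I`. -/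
theorem stmt0 {Γ I : Type*} [Group Γ] [MulAction Γ I] [Infinite I]
    (hicc : ∀ g : Γ, g ≠ 1 → (Set.range fun h : Γ => h * g * h⁻¹).Infinite)
    (hstab : ∃ κ : ℕ, ∀ J : Finset I, κ ≤ J.card → {g : Γ | ∀ i ∈ J, g • i = i}.Finite) :
    ∀ g : Γ, g ≠ 1 → {i : I | g • i ≠ i}.Infinite := by
  classical
  obtain ⟨κ, hκ⟩ := hstab
  intro g hg
  by_contra hfin
  rw [Set.not_infinite] at hfin
  set F := hfin.toFinset with hF
  set m := F.card with hm
  obtain ⟨J, hJcard⟩ : ∃ J : Finset I, J.card = κ + m :=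
    Infinite.exists_subset_card_eq I (κ + m)
  -- each conjugate fixes at least κ points of J
  have key : ∀ h : Γ, ∃ K ∈ J.powersetCard κ, ∀ i ∈ K, (h * g * h⁻¹) • i = i := by
    intro h
    have hsubF : (J.filter fun i => ¬ (h * g * h⁻¹) • i = i) ⊆ F.image (fun j => h • j) := by
      intro i hi
      simp only [Finset.mem_filter] at hi
      rw [Finset.mem_image]
      refine ⟨h⁻¹ • i, ?_, by simp⟩
      rw [hF, Set.Finite.mem_toFinset]
      simp only [Set.mem_setOf_eq]
      intro hc
      apply hi.2
      have := congrArg (fun x => h • x) hc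
      simpa [mul_smul] using this
    have hmoved : (J.filter fun i => ¬ (h * g * h⁻¹) • i = i).card ≤ m :=
      le_trans (Finset.card_le_card hsubF) Finset.card_image_le
    have hsplit := Finset.card_filter_add_card_filter_not
      (s := J) (p := fun i => (h * g * h⁻¹) • i = i)
    have hfix : κ ≤ (J.filter fun i => (h * g * h⁻¹) • i = i).card := by omega
    obtain ⟨K, hK1, hK2⟩ := Finset.exists_subset_card_eq hfix
    refine ⟨K, Finset.mem_powersetCard.mpr ⟨hK1.trans (Finset.filter_subset _ _), hK2⟩, ?_⟩
    intro i hi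
    have := hK1 hi
    simp only [Finset.mem_filter] at this
    exact this.2
  have hsub : (Set.range fun h : Γ => h * g * h⁻¹) ⊆
      ⋃ K ∈ J.powersetCard κ, {g' : Γ | ∀ i ∈ K, g' • i = i} := by
    rintro c ⟨h, rfl⟩
    obtain ⟨K, hK, hfix⟩ := key h
    exact Set.mem_biUnion hK hfix
  have hfinU : (⋃ K ∈ J.powersetCard κ, {g' : Γ | ∀ i ∈ K, g' • i = i}).Finite :=
    Set.Finite.biUnion (J.powersetCard κ).finite_toSet
      (fun K hK => hκ K (Finset.mem_powersetCard.mp hK).2.ge)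
  exact hicc g hg (hfinU.subset hsub)
end

section
/- Let Γ be a group acting on an infinite set I, and suppose there exists κ ∈ ℕ such that for every finite subset J ⊆ I with |J| ≥ κ the stabilizer Stab J = {g ∈ Γ : g·i = i for all i ∈ J} is finite. Then for every n ∈ ℕ the set 𝒢_n := {g ∈ Γ : the set {i ∈ I : g·i ≠ i} is finite with at most n elements} is a finite subset of Γ. -/
/-- If a group `Γ` acts on an infinite set `I` such that the pointwise stabilizer of every
finite subset `J ⊆ I` with `|J| ≥ κ` is finite, then for every `n` the set of elements of `Γ`
moving at most `n` points of `I` is finite. -/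
theorem stmt1 {Γ I : Type*} [Group Γ] [MulAction Γ I] [Infinite I]
    (hstab : ∃ κ : ℕ, ∀ J : Finset I, κ ≤ J.card → {g : Γ | ∀ i ∈ J, g • i = i}.Finite) :
    ∀ n : ℕ,
      {g : Γ | {i : I | g • i ≠ i}.Finite ∧ {i : I | g • i ≠ i}.ncard ≤ n}.Finite := by
  classical
  obtain ⟨κ, hκ⟩ := hstab
  intro n
  obtain ⟨F, hF⟩ := Infinite.exists_subset_card_eq I (κ + n)
  have hsub : {g : Γ | {i : I | g • i ≠ i}.Finite ∧ {i : I | g • i ≠ i}.ncard ≤ n} ⊆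
      ⋃ J ∈ F.powerset.filter (fun J => κ ≤ J.card), {g : Γ | ∀ i ∈ J, g • i = i} := by
    rintro g ⟨hfin, hcard⟩
    have hcard' : hfin.toFinset.card ≤ n := by
      rwa [← Set.ncard_eq_toFinset_card _ hfin]
    refine Set.mem_biUnion (x := F \ hfin.toFinset) ?_ ?_
    · refine Finset.mem_filter.mpr ⟨Finset.mem_powerset.mpr Finset.sdiff_subset, ?_⟩
      have := Finset.le_card_sdiff hfin.toFinset F
      omega
    · intro i hi
      simp only [Finset.mem_sdiff, Set.Finite.mem_toFinset, Set.mem_setOf_eq, not_not] at hi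
      exact hi.2
  exact Set.Finite.subset (Set.Finite.biUnion (Finset.finite_toSet _) (by
    intro J hJ
    simp only [Finset.coe_filter, Set.mem_setOf_eq, Finset.mem_powerset] at hJ
    exact hκ J hJ.2)) hsub
end

section
/- Let Γ be a countable group acting on a countable set I, let X₀ be a standard Borel space and μ₀ a probability measure on X₀ that is non-trivial, i.e., there is a measurable set A ⊆ X₀ with 0 < μ₀(A) < 1. Let μ = μ₀^{⊗I} be the product probability measure on X₀^I. If g ∈ Γ is such that the set {i ∈ I : g·i ≠ i} is infinite, then the set {x ∈ X₀^I : x(g⁻¹·i) = x(i) for all i ∈ I} of points of X₀^I fixed by the generalized Bernoulli shift T_g is μ-null. -/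
open MeasureTheory

/-! If `x` is fixed by the shift, then `x (σ i) = x i` for `σ = (g⁻¹ • ·)` and every `i`.
Choose `n` moved points whose pairs `{i, σ i}` are pairwise disjoint (possible because `σ` is
injective and moves infinitely many points). By independence of the coordinates, the probability
that each of these `n` pairs lies entirely in `A` or entirely in `Aᶜ` is
`(μ₀ A ^ 2 + μ₀ Aᶜ ^ 2) ^ n`, which tends to `0` since `0 < μ₀ A < 1`. -/

open Finset in
theorem Function.Injective.exists_finset_card_eq_mapsTo_compl {I : Type*} {σ : I → I}
    (hσ : σ.Injective) (hmoved : {i | σ i ≠ i}.Infinite) (n : ℕ) :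
    ∃ P : Finset I, #P = n ∧ Set.MapsTo σ P (↑P)ᶜ := by
  classical
  induction n with
  | zero => exact ⟨∅, rfl, by simp⟩
  | succ n ih =>
    obtain ⟨P, hcard, hP⟩ := ih
    have hfin : (↑P ∪ σ '' P ∪ σ ⁻¹' P : Set I).Finite :=
      (P.finite_toSet.union (P.finite_toSet.image σ)).union
        (P.finite_toSet.preimage hσ.injOn)
    obtain ⟨i, hi, hiP⟩ := (hmoved.sdiff hfin).nonempty
    simp only [Set.mem_ofPred_eq, Set.mem_union, Set.mem_image, Set.mem_preimage,
      Finset.mem_coe, not_or, not_exists, not_and] at hi hiP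
    obtain ⟨⟨hiP, hiσP⟩, hσiP⟩ := hiP
    refine ⟨insert i P, by rw [card_insert_of_notMem hiP, hcard], ?_⟩
    intro j hj
    simp only [coe_insert, Set.mem_insert_iff, mem_coe, Set.mem_compl_iff, not_or] at hj ⊢
    rcases hj with rfl | hj
    · exact ⟨hi, hσiP⟩
    · exact ⟨hiσP j hj, hP hj⟩

theorem ENNReal.sq_lt_self {a : ENNReal} (h₀ : 0 < a) (h₁ : a < 1) : a ^ 2 < a := by
  lift a to NNReal using h₁.ne_top
  have h : a ^ 2 < a :=
    pow_lt_self_of_lt_one₀ (by exact_mod_cast h₀) (by exact_mod_cast h₁) (by norm_num)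
  exact_mod_cast h

theorem sq_add_sq_compl_lt_one {X : Type*} [MeasurableSpace X] {μ : Measure X}
    [IsProbabilityMeasure μ] {A : Set X} (hA : MeasurableSet A) (h₀ : 0 < μ A) (h₁ : μ A < 1) :
    μ A ^ 2 + μ Aᶜ ^ 2 < 1 := by
  have hAc₀ : 0 < μ Aᶜ := by
    rw [prob_compl_eq_one_sub hA]; exact tsub_pos_of_lt h₁
  have hAc₁ : μ Aᶜ < 1 := by
    rw [prob_compl_eq_one_sub hA]; exact ENNReal.sub_lt_self ENNReal.one_ne_top one_ne_zero h₀.ne'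
  calc μ A ^ 2 + μ Aᶜ ^ 2 < μ A + μ Aᶜ :=
        ENNReal.add_lt_add (ENNReal.sq_lt_self h₀ h₁) (ENNReal.sq_lt_self hAc₀ hAc₁)
    _ = 1 := prob_add_prob_compl hA

section Cylinders

variable {I X₀ : Type*} [MeasurableSpace X₀] {μ₀ : Measure X₀} {μ : Measure (I → X₀)}

open Finset Function in
theorem measure_forall_exists_forall_mem_le_prod_sum {ι β : Type*} [Fintype ι] [Fintype β]
    (hμ : ∀ (s : Finset I) (f : I → Set X₀), (∀ i, MeasurableSet (f i)) →
      μ {x : I → X₀ | ∀ i ∈ s, x i ∈ f i} = ∏ i ∈ s, μ₀ (f i))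
    {B : β → Set X₀} (hB : ∀ c, MeasurableSet (B c))
    {t : ι → Finset I} (ht : Pairwise (Disjoint on t)) :
    μ {x | ∀ k, ∃ c, ∀ i ∈ t k, x i ∈ B c} ≤ ∏ k, ∑ c, μ₀ (B c) ^ #(t k) := by
  classical
  let s := univ.biUnion t
  let f (ε : ι → β) (i : I) : Set X₀ := ⋂ k, ⋂ (_ : i ∈ t k), B (ε k)
  have hf {ε k i} (hi : i ∈ t k) : f ε i = B (ε k) := by
    have hblock (l : ι) : i ∈ t l ↔ l = k :=
      ⟨fun hl => ht.eq (not_disjoint_iff.2 ⟨i, hl, hi⟩), by rintro rfl; exact hi⟩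
    simp only [f, hblock, Set.iInter_iInter_eq_left]
  have hcover : {x : I → X₀ | ∀ k, ∃ c, ∀ i ∈ t k, x i ∈ B c} ⊆
      ⋃ ε, {x | ∀ i ∈ s, x i ∈ f ε i} := by
    intro x hx
    choose ε hε using hx
    simp only [Set.mem_iUnion, Set.mem_ofPred_eq, Set.mem_iInter, f]
    exact ⟨ε, fun i _ k hi => hε k i hi⟩
  have hcyl (ε : ι → β) : μ {x | ∀ i ∈ s, x i ∈ f ε i} = ∏ k, μ₀ (B (ε k)) ^ #(t k) := by
    rw [hμ s (f ε) fun i => .iInter fun k => .iInter fun _ => hB _,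
      prod_biUnion (ht.set_pairwise _)]
    exact prod_congr rfl fun k _ => (prod_congr rfl fun i hi => by rw [hf hi]).trans (prod_const _)
  calc _ ≤ μ (⋃ ε, {x | ∀ i ∈ s, x i ∈ f ε i}) := measure_mono hcover
    _ ≤ ∑ ε, μ {x | ∀ i ∈ s, x i ∈ f ε i} := measure_iUnion_fintype_le _ _
    _ = ∏ k, ∑ c, μ₀ (B c) ^ #(t k) := by simp only [hcyl, Fintype.prod_sum]

open Finset Function in
theorem measure_setOf_forall_apply_comp_eq_eq_zero [IsProbabilityMeasure μ₀]
    (hμ₀ : ∃ A : Set X₀, MeasurableSet A ∧ 0 < μ₀ A ∧ μ₀ A < 1)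
    (hμ : ∀ (s : Finset I) (f : I → Set X₀), (∀ i, MeasurableSet (f i)) →
      μ {x : I → X₀ | ∀ i ∈ s, x i ∈ f i} = ∏ i ∈ s, μ₀ (f i))
    {σ : I → I} (hσ : σ.Injective) (hmoved : {i | σ i ≠ i}.Infinite) :
    μ {x : I → X₀ | ∀ i, x (σ i) = x i} = 0 := by
  classical
  obtain ⟨A, hA, h₀, h₁⟩ := hμ₀
  have hbound (n : ℕ) :
      μ {x : I → X₀ | ∀ i, x (σ i) = x i} ≤ (μ₀ A ^ 2 + μ₀ Aᶜ ^ 2) ^ n := by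
    obtain ⟨P, hcard, hP⟩ := hσ.exists_finset_card_eq_mapsTo_compl hmoved n
    have hne (k l : P) : (k : I) ≠ σ l := fun h => hP l.2 (h ▸ k.2 : σ l ∈ P)
    let t (k : P) : Finset I := {↑k, σ k}
    have ht : Pairwise (Disjoint on t) := fun k l hkl => by
      simp only [onFun, t, disjoint_insert_left, disjoint_insert_right, disjoint_singleton,
        mem_insert, mem_singleton, not_or]
      exact ⟨⟨Subtype.coe_ne_coe.2 hkl.symm, hne l k⟩, hne k l, hσ.ne (Subtype.coe_ne_coe.2 hkl)⟩
    have hcard_t (k : P) : #(t k) = 2 := card_pair (hne k k)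
    calc μ {x : I → X₀ | ∀ i, x (σ i) = x i}
        ≤ μ {x | ∀ k, ∃ c : Bool, ∀ i ∈ t k, x i ∈ bif c then A else Aᶜ} := by
          refine measure_mono fun x hx k => ⟨decide (x k ∈ A), fun i hi => ?_⟩
          have hxi : x i = x k := by
            obtain rfl | rfl : i = k ∨ i = σ k := by simpa [t] using hi
            exacts [rfl, hx k]
          by_cases hxA : x k ∈ A <;> simp [hxi, hxA]
      _ ≤ ∏ k, ∑ c : Bool, μ₀ (bif c then A else Aᶜ) ^ #(t k) :=
          measure_forall_exists_forall_mem_le_prod_sum hμ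
            (fun c => by cases c <;> simp [hA, hA.compl]) ht
      _ = (μ₀ A ^ 2 + μ₀ Aᶜ ^ 2) ^ n := by simp [hcard_t, hcard]
  exact le_antisymm (ge_of_tendsto' (ENNReal.tendsto_pow_atTop_nhds_zero_of_lt_one
    (sq_add_sq_compl_lt_one hA h₀ h₁)) hbound) bot_le

end Cylinders

theorem stmt2_general {Γ I X₀ : Type*} [Group Γ] [MulAction Γ I]
    [MeasurableSpace X₀]
    (μ₀ : Measure X₀) [IsProbabilityMeasure μ₀]
    (hμ₀ : ∃ A : Set X₀, MeasurableSet A ∧ 0 < μ₀ A ∧ μ₀ A < 1)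
    (μ : Measure (I → X₀))
    (hμ : ∀ (s : Finset I) (f : I → Set X₀), (∀ i, MeasurableSet (f i)) →
      μ {x : I → X₀ | ∀ i ∈ s, x i ∈ f i} = ∏ i ∈ s, μ₀ (f i))
    (g : Γ) (hg : {i : I | g • i ≠ i}.Infinite) :
    μ {x : I → X₀ | ∀ i : I, x (g⁻¹ • i) = x i} = 0 := by
  refine measure_setOf_forall_apply_comp_eq_eq_zero hμ₀ hμ (MulAction.injective g⁻¹) ?_
  simpa only [ne_eq, inv_smul_eq_iff, eq_comm (b := g • _)] using hg

/-- For the generalized Bernoulli action of a countable group `Γ` on `X₀^I` built from a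
non-trivial probability space `(X₀, μ₀)`, any group element `g` moving infinitely many
`i ∈ I` has a `μ`-null fixed-point set, where `μ = μ₀^{⊗ I}` is the product probability
measure (characterized by its values on measurable cylinder sets). -/
theorem stmt2 {Γ I X₀ : Type*} [Group Γ] [MulAction Γ I] [Countable Γ] [Countable I]
    [MeasurableSpace X₀] [StandardBorelSpace X₀]
    (μ₀ : Measure X₀) [IsProbabilityMeasure μ₀]
    (hμ₀ : ∃ A : Set X₀, MeasurableSet A ∧ 0 < μ₀ A ∧ μ₀ A < 1)
    (μ : Measure (I → X₀)) [IsProbabilityMeasure μ]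
    (hμ : ∀ (s : Finset I) (f : I → Set X₀), (∀ i, MeasurableSet (f i)) →
      μ {x : I → X₀ | ∀ i ∈ s, x i ∈ f i} = ∏ i ∈ s, μ₀ (f i))
    (g : Γ) (hg : {i : I | g • i ≠ i}.Infinite) :
    μ {x : I → X₀ | ∀ i : I, x (g⁻¹ • i) = x i} = 0 :=
  stmt2_general μ₀ hμ₀ μ hμ g hg
end

section
/- Let Γ be a countable group acting on a countable set I such that every orbit Γ·i is infinite, let X₀ be a standard Borel space and μ₀ a probability measure on X₀, and let μ = μ₀^{⊗I} be the product probability measure on X₀^I. Then the generalized Bernoulli action is ergodic: if S ⊆ X₀^I is measurable and μ(T_g⁻¹(S) Δ S) = 0 for every g ∈ Γ, then μ(S) = 0 or μ(S) = 1. -/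
/-!
Approximate an invariant set `S` within `ε` by a cylinder `E` depending on finitely many
coordinates `s`. Since orbits are infinite, some `g` moves `s` off itself (B. H. Neumann's
lemma on coverings by cosets), so `E` and its shift `F` depend on disjoint coordinates and are
independent; invariance makes `F` also `ε`-close to `S`. Hence `μ S ≈ μ (E ∩ F) = μ E * μ F ≈
(μ S)²`, so `μ S = (μ S)²`.
-/

open MeasureTheory ProbabilityTheory Set
open scoped Pointwise symmDiff

namespace MulAction

variable {G α : Type*} [Group G] [MulAction G α]

theorem exists_smul_disjoint_of_forall_infinite_orbit (h : ∀ a : α, (orbit G a).Infinite)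
    (s : Finset α) : ∃ g : G, Disjoint (g • (s : Set α)) s := by
  by_contra! hs
  -- Otherwise the sets `{g | g • j = i}` with `i, j ∈ s`, cosets of stabilizers, cover `G`.
  let c : α × α → G := fun p ↦ Classical.epsilon fun g : G ↦ g • p.2 = p.1
  have hcover : ⋃ p ∈ s ×ˢ s, c p • (stabilizer G p.2 : Set G) = univ := by
    refine eq_univ_of_forall fun γ ↦ ?_
    obtain ⟨i, ⟨j, hj, hγj⟩, hi⟩ := not_disjoint_iff.mp (hs γ)
    have hc : c (i, j) • j = i := Classical.epsilon_spec (p := (· • j = i)) ⟨γ, hγj⟩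
    refine mem_biUnion (x := (i, j)) (Finset.mem_product.mpr ⟨hi, hj⟩) ?_
    rw [mem_leftCoset_iff, SetLike.mem_coe, mem_stabilizer_iff, mul_smul]
    exact inv_smul_eq_iff.mpr (hγj.trans hc.symm)
  obtain ⟨p, -, hp⟩ := Subgroup.exists_finiteIndex_of_leftCoset_cover hcover
  exact hp.index_ne_zero (by rw [index_stabilizer, (h p.2).ncard])

end MulAction

theorem measure_eq_zero_or_one_of_forall_approx_indepSet {Ω : Type*} [MeasurableSpace Ω]
    {μ : Measure Ω} [IsProbabilityMeasure μ] {S : Set Ω} (hS : MeasurableSet S)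
    (h : ∀ ε > 0, ∃ E F, MeasurableSet E ∧ MeasurableSet F ∧ IndepSet E F μ ∧
      μ.real (S ∆ E) ≤ ε ∧ μ.real (S ∆ F) ≤ ε) :
    μ S = 0 ∨ μ S = 1 := by
  set a := μ.real S
  have hself : a = a * a := by
    refine eq_of_forall_dist_le fun ε hε ↦ ?_
    obtain ⟨E, F, hE, hF, hEF, hSE, hSF⟩ := h (ε / 4) (by positivity)
    have hE' : |a - μ.real E| ≤ ε / 4 :=
      (abs_measureReal_sub_le_measureReal_symmDiff hS.nullMeasurableSet
        hE.nullMeasurableSet).trans hSE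
    have hF' : |a - μ.real F| ≤ ε / 4 :=
      (abs_measureReal_sub_le_measureReal_symmDiff hS.nullMeasurableSet
        hF.nullMeasurableSet).trans hSF
    have hEF' : |a - μ.real E * μ.real F| ≤ ε / 2 := by
      have hsub : S ∆ (E ∩ F) ⊆ S ∆ E ∪ S ∆ F := by
        intro x
        simp only [mem_symmDiff, mem_union, mem_inter_iff]
        tauto
      calc |a - μ.real E * μ.real F| = |a - μ.real (E ∩ F)| := by
            simp only [measureReal_def, hEF.measure_inter_eq_mul, ENNReal.toReal_mul]
        _ ≤ μ.real (S ∆ (E ∩ F)) :=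
            abs_measureReal_sub_le_measureReal_symmDiff hS.nullMeasurableSet
              (hE.inter hF).nullMeasurableSet
        _ ≤ μ.real (S ∆ E) + μ.real (S ∆ F) :=
            (measureReal_mono hsub).trans (measureReal_union_le _ _)
        _ ≤ ε / 2 := by linarith
    -- `a - a² = (a - e f) + e (f - a) + a (e - a)` with `e = μ.real E` and `0 ≤ a, e ≤ 1`
    rw [Real.dist_eq]
    rw [abs_le] at hE' hF' hEF' ⊢
    constructor <;> nlinarith [measureReal_nonneg (μ := μ) (s := S),
      measureReal_nonneg (μ := μ) (s := E), measureReal_le_one (μ := μ) (s := S),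
      measureReal_le_one (μ := μ) (s := E)]
  have h01 : a = 0 ∨ a - 1 = 0 := mul_eq_zero.mp (by linarith)
  rcases h01 with h0 | h1
  · exact Or.inl ((measureReal_eq_zero_iff).mp h0)
  · exact Or.inr ((ENNReal.toReal_eq_one_iff _).mp (sub_eq_zero.mp h1))

section Bernoulli

variable {Γ I X₀ : Type*} [Group Γ] [MulAction Γ I] [MeasurableSpace X₀]

def bernoulliShift (g : Γ) (x : I → X₀) : I → X₀ := fun i ↦ x (g⁻¹ • i)

theorem measurable_bernoulliShift_cylinderEvents (g : Γ) (Δ : Set I) :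
    Measurable[cylinderEvents (g⁻¹ • Δ), cylinderEvents Δ] (bernoulliShift (X₀ := X₀) g) :=
  measurable_cylinderEvents_iff.2 fun _ hi ↦ measurable_cylinderEvent_apply (smul_mem_smul_set hi)

variable (μ₀ : Measure X₀) [IsProbabilityMeasure μ₀]

theorem measurePreserving_bernoulliShift (g : Γ) :
    MeasurePreserving (bernoulliShift g) (Measure.infinitePi fun _ : I ↦ μ₀)
      (Measure.infinitePi fun _ ↦ μ₀) :=
  ⟨measurable_pi_lambda _ fun _ ↦ measurable_pi_apply _,
    Measure.map_infinitePi_infinitePi_of_inj (MulAction.injective g⁻¹)⟩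

theorem indepSet_cylinder_preimage_bernoulliShift {g : Γ} {s : Finset I}
    (hs : Disjoint (s : Set I) (g⁻¹ • (s : Set I))) {B : Set (s → X₀)} (hB : MeasurableSet B) :
    IndepSet (cylinder s B) (bernoulliShift g ⁻¹' cylinder s B)
      (Measure.infinitePi fun _ : I ↦ μ₀) := by
  have hcoord : iIndep (fun i : I ↦ MeasurableSpace.comap (fun x : I → X₀ ↦ x i) ‹_›)
      (Measure.infinitePi fun _ : I ↦ μ₀) :=
    (iIndepFun_infinitePi (X := fun _ x ↦ x) fun _ ↦ measurable_id).iIndep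
  have hB' : MeasurableSet[cylinderEvents (s : Set I)] (cylinder s B) :=
    measurable_restrict_cylinderEvents (X := fun _ : I ↦ X₀) _ hB
  exact (indep_iSup_of_disjoint (fun i ↦ (measurable_pi_apply i).comap_le) hcoord hs
    |>.indepSet_of_measurableSet hB' (measurable_bernoulliShift_cylinderEvents g _ hB'))

theorem measure_eq_zero_or_one_of_bernoulliShift_invariant
    (horb : ∀ i : I, (MulAction.orbit Γ i).Infinite) {S : Set (I → X₀)} (hS : MeasurableSet S)
    (hinv : ∀ g : Γ, Measure.infinitePi (fun _ ↦ μ₀) ((bernoulliShift g ⁻¹' S) ∆ S) = 0) :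
    Measure.infinitePi (fun _ ↦ μ₀) S = 0 ∨ Measure.infinitePi (fun _ ↦ μ₀) S = 1 := by
  set P := Measure.infinitePi fun _ : I ↦ μ₀
  have hdense : P.MeasureDense (measurableCylinders fun _ : I ↦ X₀) :=
    .of_generateFrom_isSetAlgebra_finite P isSetAlgebra_measurableCylinders
      generateFrom_measurableCylinders.symm
  refine measure_eq_zero_or_one_of_forall_approx_indepSet hS fun ε hε ↦ ?_
  obtain ⟨E, hEcyl, hSE⟩ := hdense.approx S hS (measure_ne_top _ _) ε hε
  obtain ⟨s, B, hB, rfl⟩ := (mem_measurableCylinders _).1 hEcyl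
  obtain ⟨g, hg⟩ := MulAction.exists_smul_disjoint_of_forall_infinite_orbit horb s
  have hT := measurePreserving_bernoulliShift (I := I) μ₀ g⁻¹
  have hSE' : P.real (S ∆ cylinder s B) ≤ ε := ENNReal.toReal_le_of_le_ofReal hε.le hSE.le
  refine ⟨cylinder s B, bernoulliShift g⁻¹ ⁻¹' cylinder s B, hB.cylinder,
    hT.measurable hB.cylinder, indepSet_cylinder_preimage_bernoulliShift μ₀
      (by rwa [inv_inv, disjoint_comm]) hB, hSE', ?_⟩
  calc P.real (S ∆ (bernoulliShift g⁻¹ ⁻¹' cylinder s B))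
      ≤ P.real (S ∆ (bernoulliShift g⁻¹ ⁻¹' S))
        + P.real ((bernoulliShift g⁻¹ ⁻¹' S) ∆ (bernoulliShift g⁻¹ ⁻¹' cylinder s B)) :=
        measureReal_symmDiff_le _
    _ = P.real (S ∆ cylinder s B) := by
        rw [symmDiff_comm S, measureReal_def, hinv, ← preimage_symmDiff,
          hT.measureReal_preimage (hS.symmDiff hB.cylinder).nullMeasurableSet,
          ENNReal.toReal_zero, zero_add]
    _ ≤ ε := hSE'

end Bernoulli

theorem stmt3_general {Γ I X₀ : Type*} [Group Γ] [MulAction Γ I]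
    [MeasurableSpace X₀]
    (μ₀ : Measure X₀) [IsProbabilityMeasure μ₀]
    (μ : Measure (I → X₀))
    (hμ : ∀ (s : Finset I) (f : I → Set X₀), (∀ i, MeasurableSet (f i)) →
      μ {x : I → X₀ | ∀ i ∈ s, x i ∈ f i} = ∏ i ∈ s, μ₀ (f i))
    (horb : ∀ i : I, (MulAction.orbit Γ i).Infinite)
    (S : Set (I → X₀)) (hS : MeasurableSet S)
    (hinv : ∀ g : Γ, μ (symmDiff ((fun x : I → X₀ => fun i : I => x (g⁻¹ • i)) ⁻¹' S) S) = 0) :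
    μ S = 0 ∨ μ S = 1 := by
  obtain rfl : μ = Measure.infinitePi fun _ ↦ μ₀ := Measure.eq_infinitePi _ hμ
  exact measure_eq_zero_or_one_of_bernoulliShift_invariant μ₀ horb hS hinv

/-- The generalized Bernoulli action of a countable group `Γ` on `X₀^I`, where `Γ` acts on
the countable set `I` with infinite orbits, is ergodic with respect to the product
probability measure `μ = μ₀^{⊗ I}` (characterized by its values on measurable cylinder
sets): any measurable set `S` that is invariant up to null sets under all the shifts
`T_g x = fun i => x (g⁻¹ • i)` has measure `0` or `1`. -/
theorem stmt3 {Γ I X₀ : Type*} [Group Γ] [MulAction Γ I] [Countable Γ] [Countable I]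
    [MeasurableSpace X₀] [StandardBorelSpace X₀]
    (μ₀ : Measure X₀) [IsProbabilityMeasure μ₀]
    (μ : Measure (I → X₀)) [IsProbabilityMeasure μ]
    (hμ : ∀ (s : Finset I) (f : I → Set X₀), (∀ i, MeasurableSet (f i)) →
      μ {x : I → X₀ | ∀ i ∈ s, x i ∈ f i} = ∏ i ∈ s, μ₀ (f i))
    (horb : ∀ i : I, (MulAction.orbit Γ i).Infinite)
    (S : Set (I → X₀)) (hS : MeasurableSet S)
    (hinv : ∀ g : Γ, μ (symmDiff ((fun x : I → X₀ => fun i : I => x (g⁻¹ • i)) ⁻¹' S) S) = 0) :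
    μ S = 0 ∨ μ S = 1 :=
  stmt3_general μ₀ μ hμ horb S hS hinv
end

section
/- Let S be a countable group acting on a countable set I, let F := {i ∈ I : s·i = i for all s ∈ S} be the set of global fixed points, and assume that the S-orbit of every i ∈ I ∖ F is infinite. Let X₀ be a standard Borel space, μ₀ a probability measure on X₀, and μ = μ₀^{⊗I} the product probability measure on X₀^I. If T ⊆ X₀^I is measurable and μ(T_s⁻¹(T) Δ T) = 0 for every s ∈ S, then there exists a measurable set B ⊆ X₀^F such that μ(T Δ π_F⁻¹(B)) = 0, where π_F : X₀^I → X₀^F is the restriction map x ↦ x|_F. -/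
/-!
Split `X₀^I = X₀^F × X₀^(I ∖ F)`, so that `μ = ν ⊗ η`, and let `f y = η (T_y)` be the measure of
the fibre of `T` over `y ∈ X₀^F`. Replacing the second coordinate by an independent copy, the set
`{(y, z, z') | (y, z) ∈ T xor (y, z') ∈ T}` has `ν ⊗ η ⊗ η`-measure `∫ 2 f (1 - f) dν`, so if it
is null then `f ∈ {0, 1}` a.e. and `T` is a.e. equal to `{f = 1} × X₀^(I ∖ F)`.

To show that it is null, approximate `T` by a set `A` depending on the coordinates in `F` and in a
finite `t ⊆ I ∖ F`. Since the orbits of the points of `t` are infinite, B. H. Neumann's lemma on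
coset covers gives `s` with `s • t` disjoint from `t`. As `s` fixes `F` pointwise, the pair
`(A, T_s⁻¹ A)` has the same joint law as the two copies of `A` in `ν ⊗ η ⊗ η`, while the invariance
of `T` gives `μ (A ∆ T_s⁻¹ A) ≤ 2 μ (T ∆ A)`. Hence the `ν ⊗ η ⊗ η`-measure of the xor-set of `T`
is at most `4 μ (T ∆ A)`, which is arbitrarily small.
-/

open MeasureTheory ProbabilityTheory Set Function Filter
open scoped ENNReal Pointwise Topology

namespace MulAction

theorem exists_smul_ne_of_infinite_orbit {S I : Type*} [Group S] [MulAction S I]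
    (t : Finset I) (ht : ∀ j ∈ t, (orbit S j).Infinite) :
    ∃ s : S, ∀ j ∈ t, ∀ k ∈ t, s • j ≠ k := by
  classical
  by_contra! hc
  let g : I × I → S := fun p ↦ if h : ∃ u : S, u • p.1 = p.2 then h.choose else 1
  have hcover : ⋃ p ∈ t ×ˢ t, g p • (stabilizer S p.1 : Set S) = univ := by
    refine eq_univ_of_forall fun u ↦ ?_
    obtain ⟨j, hj, k, hk, hujk⟩ := hc u
    have hex : ∃ v : S, v • j = k := ⟨u, hujk⟩
    refine mem_iUnion₂.mpr ⟨(j, k), Finset.mk_mem_product hj hk, ?_⟩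
    rw [mem_leftCoset_iff, SetLike.mem_coe, mem_stabilizer_iff, mul_smul, hujk, inv_smul_eq_iff]
    simp only [g, dif_pos hex]
    exact hex.choose_spec.symm
  obtain ⟨p, hp, hfin⟩ := Subgroup.exists_finiteIndex_of_leftCoset_cover hcover
  refine ht p.1 (Finset.mem_product.mp hp).1 (finite_of_ncard_ne_zero ?_)
  rw [← index_stabilizer]
  exact hfin.index_ne_zero

end MulAction

theorem MeasurableSpace.comap_comp_le_iSup_comap_eval {ι α : Type*} {X : ι → Type*}
    [∀ i, MeasurableSpace (X i)] (f : α → ι) :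
    MeasurableSpace.comap (fun (x : ∀ i, X i) a ↦ x (f a)) MeasurableSpace.pi ≤
      ⨆ i ∈ range f, MeasurableSpace.comap (fun x : ∀ i, X i ↦ x i) inferInstance := by
  simp only [MeasurableSpace.pi, MeasurableSpace.comap_iSup, MeasurableSpace.comap_comp]
  exact iSup_le fun a ↦ le_iSup₂_of_le (f a) ⟨a, rfl⟩ le_rfl

theorem MeasurableEquiv.preimage_symm_preimage {α β : Type*} [MeasurableSpace α]
    [MeasurableSpace β] (e : α ≃ᵐ β) (s : Set α) : e ⁻¹' (e.symm ⁻¹' s) = s :=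
  e.toEquiv.preimage_symm_preimage s

namespace MeasureTheory

theorem Measure.MeasureDense.eq_zero_of_le_mul {α : Type*} [MeasurableSpace α] {μ : Measure α}
    [IsFiniteMeasure μ] {𝒜 : Set (Set α)} (h𝒜 : μ.MeasureDense 𝒜) {s : Set α}
    (hs : MeasurableSet s) {a c : ℝ≥0∞} (hc : c ≠ ∞) (h : ∀ A ∈ 𝒜, a ≤ c * μ (symmDiff s A)) :
    a = 0 := by
  have hlim : Tendsto (fun δ : ℝ ↦ c * ENNReal.ofReal δ) (𝓝[>] 0) (𝓝 0) := by
    simpa using ENNReal.Tendsto.const_mul (ENNReal.tendsto_ofReal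
      (tendsto_nhdsWithin_of_tendsto_nhds tendsto_id : Tendsto id (𝓝[>] (0 : ℝ)) (𝓝 0)))
      (Or.inr hc)
  refine le_antisymm (ge_of_tendsto hlim ?_) zero_le
  filter_upwards [self_mem_nhdsWithin] with δ hδ
  obtain ⟨A, hA, hlt⟩ := h𝒜.approx s hs (measure_ne_top μ s) δ hδ
  exact (h A hA).trans (by gcongr)

theorem MeasurePreserving.measure_symmDiff_preimage_le {α : Type*} [MeasurableSpace α]
    {μ : Measure α} {f : α → α} (hf : MeasurePreserving f μ μ) {T A : Set α}
    (hT : MeasurableSet T) (hA : MeasurableSet A) (hTf : μ (symmDiff (f ⁻¹' T) T) = 0) :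
    μ (symmDiff A (f ⁻¹' A)) ≤ 2 * μ (symmDiff T A) := by
  have hshift : μ (symmDiff (f ⁻¹' T) (f ⁻¹' A)) = μ (symmDiff T A) := by
    rw [← preimage_symmDiff]
    exact hf.measure_preimage (hT.symmDiff hA).nullMeasurableSet
  calc μ (symmDiff A (f ⁻¹' A))
      ≤ μ (symmDiff A T) + (μ (symmDiff T (f ⁻¹' T)) + μ (symmDiff (f ⁻¹' T) (f ⁻¹' A))) :=
        (measure_symmDiff_le _ T _).trans (add_le_add_right (measure_symmDiff_le _ _ _) _)
    _ = 2 * μ (symmDiff T A) := by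
        rw [symmDiff_comm T (f ⁻¹' T), hTf, hshift, symmDiff_comm]; ring

section Joining

variable {Y Z : Type*} [MeasurableSpace Y] [MeasurableSpace Z] {ν : Measure Y} {η : Measure Z}

/-- `ν ⊗ η ⊗ η` is the self-joining of `ν ⊗ η` relatively independent over `Y`; the defect of `A`
vanishes exactly when `A` agrees a.e. with a set `B ×ˢ univ`. -/
noncomputable def joiningDefect (ν : Measure Y) (η : Measure Z) (A : Set (Y × Z)) : ℝ≥0∞ :=
  (ν.prod (η.prod η)) (symmDiff (Prod.map id (Prod.fst : Z × Z → Z) ⁻¹' A)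
    (Prod.map id (Prod.snd : Z × Z → Z) ⁻¹' A))

theorem joiningDefect_eq_of_map_eq {Ω : Type*} [MeasurableSpace Ω] {P : Measure Ω}
    {f : Ω → Y} {g₁ g₂ : Ω → Z} (hf : Measurable f) (hg₁ : Measurable g₁)
    (hg₂ : Measurable g₂) (hP : P.map (fun ω ↦ (f ω, (g₁ ω, g₂ ω))) = ν.prod (η.prod η))
    {D : Set (Y × Z)} (hD : MeasurableSet D) :
    joiningDefect ν η D =
      P (symmDiff ((fun ω ↦ (f ω, g₁ ω)) ⁻¹' D) ((fun ω ↦ (f ω, g₂ ω)) ⁻¹' D)) := by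
  rw [joiningDefect, ← hP, Measure.map_apply (hf.prodMk (hg₁.prodMk hg₂))
    (((measurable_id.prodMap measurable_fst) hD).symmDiff
      ((measurable_id.prodMap measurable_snd) hD))]
  rfl

variable [IsProbabilityMeasure η]

theorem measure_eq_zero_or_one_of_prod_symmDiff {A : Set Z} (hA : MeasurableSet A)
    (h : (η.prod η) (symmDiff (A ×ˢ univ) (univ ×ˢ A)) = 0) : η A = 0 ∨ η A = 1 := by
  have hsub : A ×ˢ Aᶜ ⊆ symmDiff (A ×ˢ univ) (univ ×ˢ A) := fun p hp ↦
    Or.inl ⟨⟨hp.1, trivial⟩, fun h' ↦ hp.2 h'.2⟩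
  have h0 : η A * η Aᶜ = 0 := by rw [← Measure.prod_prod]; exact measure_mono_null hsub h
  rcases mul_eq_zero.mp h0 with h0 | h0
  · exact Or.inl h0
  · exact Or.inr ((prob_compl_eq_zero_iff hA).mp h0)

theorem measure_symmDiff_prod_univ_eq_zero {T : Set (Y × Z)} (hT : MeasurableSet T)
    (h : ∀ᵐ y ∂ν, η (Prod.mk y ⁻¹' T) = 0 ∨ η (Prod.mk y ⁻¹' T) = 1) :
    (ν.prod η) (symmDiff T ({y | η (Prod.mk y ⁻¹' T) = 1} ×ˢ univ)) = 0 := by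
  have hB : MeasurableSet {y | η (Prod.mk y ⁻¹' T) = 1} :=
    measurable_measure_prodMk_left hT (measurableSet_singleton 1)
  rw [Measure.prod_apply (hT.symmDiff (hB.prod .univ)), lintegral_eq_zero_iff
    (measurable_measure_prodMk_left (hT.symmDiff (hB.prod .univ)))]
  filter_upwards [h] with y hy
  rw [Pi.zero_apply, preimage_symmDiff, mk_preimage_prod_right_eq_if]
  rcases hy with h0 | h1
  · have hy : y ∉ {y | η (Prod.mk y ⁻¹' T) = 1} := by simp [h0]
    simpa [hy] using h0
  · have hy : y ∈ {y | η (Prod.mk y ⁻¹' T) = 1} := h1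
    simpa [hy, ← compl_eq_univ_sdiff] using
      (prob_compl_eq_zero_iff (measurable_prodMk_left hT)).mpr h1

theorem exists_measure_symmDiff_prod_univ_eq_zero_of_joiningDefect {T : Set (Y × Z)}
    (hT : MeasurableSet T) (h : joiningDefect ν η T = 0) :
    ∃ B : Set Y, MeasurableSet B ∧ (ν.prod η) (symmDiff T (B ×ˢ univ)) = 0 := by
  have hT₁ : MeasurableSet (Prod.map id (Prod.fst : Z × Z → Z) ⁻¹' T) :=
    (measurable_id.prodMap measurable_fst) hT
  have hT₂ : MeasurableSet (Prod.map id (Prod.snd : Z × Z → Z) ⁻¹' T) :=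
    (measurable_id.prodMap measurable_snd) hT
  rw [joiningDefect, Measure.prod_apply (hT₁.symmDiff hT₂), lintegral_eq_zero_iff
    (measurable_measure_prodMk_left (hT₁.symmDiff hT₂))] at h
  refine ⟨_, measurable_measure_prodMk_left hT (measurableSet_singleton 1),
    measure_symmDiff_prod_univ_eq_zero hT ?_⟩
  filter_upwards [h] with y hy
  refine measure_eq_zero_or_one_of_prod_symmDiff (measurable_prodMk_left hT) ?_
  rw [Pi.zero_apply] at hy
  convert hy using 2
  ext p
  simp [symmDiff_def]

theorem joiningDefect_le [SFinite ν] {T A : Set (Y × Z)} (hT : MeasurableSet T)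
    (hA : MeasurableSet A) :
    joiningDefect ν η T ≤ joiningDefect ν η A + 2 * (ν.prod η) (symmDiff T A) := by
  set ρ := ν.prod (η.prod η)
  have h₁ : ρ (symmDiff (Prod.map id Prod.fst ⁻¹' T) (Prod.map id Prod.fst ⁻¹' A)) =
      (ν.prod η) (symmDiff T A) := by
    rw [← preimage_symmDiff]
    exact ((MeasurePreserving.id ν).prod measurePreserving_fst).measure_preimage
      (hT.symmDiff hA).nullMeasurableSet
  have h₂ : ρ (symmDiff (Prod.map id Prod.snd ⁻¹' A) (Prod.map id Prod.snd ⁻¹' T)) =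
      (ν.prod η) (symmDiff T A) := by
    rw [← preimage_symmDiff, symmDiff_comm]
    exact ((MeasurePreserving.id ν).prod measurePreserving_snd).measure_preimage
      (hT.symmDiff hA).nullMeasurableSet
  calc joiningDefect ν η T
      ≤ ρ (symmDiff (Prod.map id Prod.fst ⁻¹' T) (Prod.map id Prod.fst ⁻¹' A)) +
        (joiningDefect ν η A +
          ρ (symmDiff (Prod.map id Prod.snd ⁻¹' A) (Prod.map id Prod.snd ⁻¹' T))) :=
        (measure_symmDiff_le _ _ _).trans (add_le_add_right (measure_symmDiff_le _ _ _) _)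
    _ = _ := by rw [h₁, h₂]; ring

theorem joiningDefect_prodMap_preimage [SFinite ν] {W : Type*} [MeasurableSpace W] {g : Z → W}
    (hg : Measurable g) {D : Set (Y × W)} (hD : MeasurableSet D) :
    joiningDefect ν η (Prod.map id g ⁻¹' D) = joiningDefect ν (η.map g) D := by
  have hD₁ : MeasurableSet (Prod.map id (Prod.fst : W × W → W) ⁻¹' D) :=
    (measurable_id.prodMap measurable_fst) hD
  have hD₂ : MeasurableSet (Prod.map id (Prod.snd : W × W → W) ⁻¹' D) :=
    (measurable_id.prodMap measurable_snd) hD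
  have hmap : ν.prod ((η.map g).prod (η.map g)) =
      (ν.prod (η.prod η)).map (Prod.map id (Prod.map g g)) := by
    rw [Measure.map_prod_map _ _ hg hg, ← Measure.map_prod_map _ _ measurable_id (hg.prodMap hg),
      Measure.map_id]
  rw [joiningDefect, joiningDefect, hmap, Measure.map_apply
    (measurable_id.prodMap (hg.prodMap hg)) (hD₁.symmDiff hD₂)]
  rfl

end Joining

section FinitarySets

variable {Y ι : Type*} {X : ι → Type*} [MeasurableSpace Y] [∀ i, MeasurableSpace (X i)]

variable (Y X) in
def finitarySets : Set (Set (Y × ∀ i, X i)) :=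
  {A | ∃ (t : Finset ι) (D : Set (Y × ∀ i : t, X i)), MeasurableSet D ∧
    A = Prod.map id t.restrict ⁻¹' D}

theorem isSetAlgebra_finitarySets : IsSetAlgebra (finitarySets Y X) where
  empty_mem := ⟨∅, ∅, .empty, rfl⟩
  compl_mem := by
    rintro _ ⟨t, D, hD, rfl⟩
    exact ⟨t, Dᶜ, hD.compl, rfl⟩
  union_mem := by
    classical
    rintro _ _ ⟨t₁, D₁, hD₁, rfl⟩ ⟨t₂, D₂, hD₂, rfl⟩
    refine ⟨t₁ ∪ t₂, Prod.map id (Finset.restrict₂ Finset.subset_union_left) ⁻¹' D₁ ∪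
      Prod.map id (Finset.restrict₂ Finset.subset_union_right) ⁻¹' D₂,
      ((measurable_id.prodMap (Finset.measurable_restrict₂ _)) hD₁).union
        ((measurable_id.prodMap (Finset.measurable_restrict₂ _)) hD₂), rfl⟩

theorem generateFrom_finitarySets :
    (inferInstance : MeasurableSpace (Y × ∀ i, X i)) =
      MeasurableSpace.generateFrom (finitarySets Y X) := by
  classical
  refine le_antisymm ?_ (MeasurableSpace.generateFrom_le ?_)
  · refine sup_le (MeasurableSpace.comap_le_iff_le_map.mpr fun B hB ↦
      .basic _ ⟨∅, B ×ˢ univ, hB.prod .univ, by ext; simp⟩) ?_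
    simp only [MeasurableSpace.pi, MeasurableSpace.comap_iSup, MeasurableSpace.comap_comp]
    refine iSup_le fun i ↦ MeasurableSpace.comap_le_iff_le_map.mpr fun B hB ↦ ?_
    let j : ({i} : Finset ι) := ⟨i, Finset.mem_singleton_self i⟩
    exact .basic _ ⟨{i}, univ ×ˢ ((fun z ↦ z j) ⁻¹' B),
      MeasurableSet.univ.prod (measurable_pi_apply j hB), by ext; simp [j]⟩
  · rintro _ ⟨t, D, hD, rfl⟩
    exact (measurable_id.prodMap (Finset.measurable_restrict t)) hD

theorem measureDense_finitarySets (μ : Measure (Y × ∀ i, X i)) [IsFiniteMeasure μ] :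
    μ.MeasureDense (finitarySets Y X) :=
  .of_generateFrom_isSetAlgebra_finite (μ := μ) isSetAlgebra_finitarySets generateFrom_finitarySets

end FinitarySets

namespace Measure

variable {ι : Type*} {X : ι → Type*} [∀ i, MeasurableSpace (X i)]
  (P : ∀ i, Measure (X i)) [∀ i, IsProbabilityMeasure (P i)]

theorem indepFun_infinitePi_comp {α β : Type*} {f : α → ι} {g : β → ι}
    (hfg : Disjoint (range f) (range g)) :
    IndepFun (fun x a ↦ x (f a)) (fun x b ↦ x (g b)) (infinitePi P) := by
  have hind := indep_iSup_of_disjoint (fun i ↦ (measurable_pi_apply i).comap_le)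
    (iIndepFun_infinitePi (P := P) (X := fun _ ↦ id) fun _ ↦ measurable_id).iIndep hfg
  exact indep_of_indep_of_le_right
    (indep_of_indep_of_le_left hind (MeasurableSpace.comap_comp_le_iSup_comap_eval f))
    (MeasurableSpace.comap_comp_le_iSup_comap_eval g)

theorem infinitePi_map_comp_prod {α β : Type*} {f : α → ι} {g : β → ι}
    (hfg : Disjoint (range f) (range g)) :
    (infinitePi P).map (fun x ↦ (fun a ↦ x (f a), fun b ↦ x (g b))) =
      ((infinitePi P).map fun x a ↦ x (f a)).prod ((infinitePi P).map fun x b ↦ x (g b)) :=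
  (indepFun_infinitePi_comp P hfg).map_prod_eq_prod_map_map
    (by fun_prop : Measurable _).aemeasurable (by fun_prop : Measurable _).aemeasurable

theorem infinitePi_map_comp_prod_prod {α β γ : Type*} {f : α → ι} {g : β → ι} {h : γ → ι}
    (hfg : Disjoint (range f) (range g)) (hfh : Disjoint (range f) (range h))
    (hgh : Disjoint (range g) (range h)) :
    (infinitePi P).map (fun x ↦ (fun a ↦ x (f a), (fun b ↦ x (g b), fun c ↦ x (h c)))) =
      ((infinitePi P).map fun x a ↦ x (f a)).prod
        (((infinitePi P).map fun x b ↦ x (g b)).prod ((infinitePi P).map fun x c ↦ x (h c))) := by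
  have hdisj : Disjoint (range f) (range (Sum.elim g h)) := by
    rw [Set.Sum.elim_range]; exact disjoint_union_right.mpr ⟨hfg, hfh⟩
  have hind := (indepFun_infinitePi_comp P hdisj).comp measurable_id
    (by fun_prop : Measurable fun (y : ∀ k, X (Sum.elim g h k)) ↦
      (fun b ↦ y (Sum.inl b), fun c ↦ y (Sum.inr c)))
  rw [← infinitePi_map_comp_prod P hgh]
  exact hind.map_prod_eq_prod_map_map (by fun_prop : Measurable _).aemeasurable
    (by fun_prop : Measurable _).aemeasurable

theorem infinitePi_map_piEquivPiSubtypeProd (p : ι → Prop) [DecidablePred p] :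
    (infinitePi P).map (MeasurableEquiv.piEquivPiSubtypeProd X p) =
      (infinitePi fun i : {i // p i} ↦ P i).prod (infinitePi fun i : {i // ¬p i} ↦ P i) := by
  have hdisj : Disjoint (range (Subtype.val : {i // p i} → ι))
      (range (Subtype.val : {i // ¬p i} → ι)) := by
    rw [Subtype.range_coe_subtype, Subtype.range_coe_subtype]; exact disjoint_compl_right
  change (infinitePi P).map (fun x ↦ (fun i : {i // p i} ↦ x i, fun i : {i // ¬p i} ↦ x i)) = _
  rw [← map_infinitePi_infinitePi_of_inj Subtype.val_injective,
    ← map_infinitePi_infinitePi_of_inj Subtype.val_injective]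
  exact infinitePi_map_comp_prod P hdisj

end Measure

section BernoulliShift

variable {I X₀ : Type*} [MeasurableSpace X₀] {μ₀ : Measure X₀} [IsProbabilityMeasure μ₀]
  {F : Set I}

theorem joiningDefect_prodMap_restrict {π : I → I} (hπ : Injective π) (hπF : ∀ i ∈ F, π i = i)
    {t : Finset {i // i ∉ F}} (ht : ∀ j ∈ t, ∀ k ∈ t, π j ≠ k)
    {D : Set ((F → X₀) × (t → X₀))} (hD : MeasurableSet D) :
    joiningDefect (Measure.infinitePi fun _ : F ↦ μ₀)
        (Measure.infinitePi fun _ : {i // i ∉ F} ↦ μ₀) (Prod.map id t.restrict ⁻¹' D) =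
      Measure.infinitePi (fun _ : I ↦ μ₀)
        (symmDiff ((fun x ↦ (fun i : F ↦ x i, fun j : t ↦ x j)) ⁻¹' D)
          ((fun x ↦ (fun i : F ↦ x i, fun j : t ↦ x (π j))) ⁻¹' D)) := by
  have hF : Disjoint (range ((↑) : F → I)) (range fun j : t ↦ (j : I)) := by
    refine disjoint_left.mpr ?_
    rintro _ ⟨i, rfl⟩ ⟨j, hj⟩
    exact (j : {i // i ∉ F}).2 (by simp only at hj; rw [hj]; exact i.2)
  have hπF' : Disjoint (range ((↑) : F → I)) (range fun j : t ↦ π j) := by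
    refine disjoint_left.mpr ?_
    rintro _ ⟨i, rfl⟩ ⟨j, hj⟩
    rw [← hπF i i.2] at hj
    exact (j : {i // i ∉ F}).2 (hπ hj ▸ i.2)
  have ht' : Disjoint (range fun j : t ↦ (j : I)) (range fun j : t ↦ π j) := by
    refine disjoint_left.mpr ?_
    rintro _ ⟨j, rfl⟩ ⟨k, hk⟩
    exact ht k k.2 j j.2 hk
  have hrestrict : (Measure.infinitePi fun _ : {i // i ∉ F} ↦ μ₀).map t.restrict =
      Measure.infinitePi fun _ : t ↦ μ₀ :=
    Measure.map_infinitePi_infinitePi_of_inj Subtype.val_injective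
  rw [joiningDefect_prodMap_preimage (Finset.measurable_restrict t) hD, hrestrict]
  refine joiningDefect_eq_of_map_eq (f := fun (x : I → X₀) (i : F) ↦ x i)
    (g₁ := fun (x : I → X₀) (j : t) ↦ x j) (g₂ := fun (x : I → X₀) (j : t) ↦ x (π j))
    (by fun_prop) (by fun_prop) (by fun_prop) ?_ hD
  rw [Measure.infinitePi_map_comp_prod_prod _ hF hπF' ht',
    Measure.map_infinitePi_infinitePi_of_inj Subtype.val_injective,
    Measure.map_infinitePi_infinitePi_of_inj (f := fun j : t ↦ (j : I))
      (Subtype.val_injective.comp Subtype.val_injective),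
    Measure.map_infinitePi_infinitePi_of_inj (f := fun j : t ↦ π j)
      (hπ.comp (Subtype.val_injective.comp Subtype.val_injective))]

theorem joiningDefect_le_of_shift_invariant {S : Type*} [Group S] [MulAction S I]
    [DecidablePred (· ∈ F)] (hF : ∀ s : S, ∀ i ∈ F, s • i = i)
    (horb : ∀ i ∉ F, (MulAction.orbit S i).Infinite) {T : Set (I → X₀)} (hT : MeasurableSet T)
    (hinv : ∀ s : S, Measure.infinitePi (fun _ : I ↦ μ₀)
      (symmDiff ((fun x : I → X₀ ↦ fun i : I ↦ x (s⁻¹ • i)) ⁻¹' T) T) = 0)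
    {t : Finset {i // i ∉ F}} {D : Set ((F → X₀) × (t → X₀))} (hD : MeasurableSet D) :
    joiningDefect (Measure.infinitePi fun _ : F ↦ μ₀)
        (Measure.infinitePi fun _ : {i // i ∉ F} ↦ μ₀)
        ((MeasurableEquiv.piEquivPiSubtypeProd (fun _ : I ↦ X₀) (· ∈ F)).symm ⁻¹' T) ≤
      4 * ((Measure.infinitePi fun _ : F ↦ μ₀).prod (Measure.infinitePi fun _ : {i // i ∉ F} ↦ μ₀))
        (symmDiff ((MeasurableEquiv.piEquivPiSubtypeProd (fun _ : I ↦ X₀) (· ∈ F)).symm ⁻¹' T)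
          (Prod.map id t.restrict ⁻¹' D)) := by
  classical
  set e := MeasurableEquiv.piEquivPiSubtypeProd (fun _ : I ↦ X₀) (· ∈ F)
  set ν := Measure.infinitePi fun _ : F ↦ μ₀
  set η := Measure.infinitePi fun _ : {i // i ∉ F} ↦ μ₀
  set μ := Measure.infinitePi fun _ : I ↦ μ₀
  set A : Set ((F → X₀) × ({i // i ∉ F} → X₀)) := Prod.map id t.restrict ⁻¹' D
  have hA : MeasurableSet A := (measurable_id.prodMap (Finset.measurable_restrict t)) hD
  have he : MeasurePreserving e μ (ν.prod η) :=
    ⟨e.measurable, Measure.infinitePi_map_piEquivPiSubtypeProd _ _⟩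
  obtain ⟨s, hs⟩ := MulAction.exists_smul_ne_of_infinite_orbit (S := S) (t.image Subtype.val)
    (by simpa using fun i hi _ ↦ horb i hi)
  set shift := fun (x : I → X₀) i ↦ x (s • i)
  have hshift : MeasurePreserving shift μ μ :=
    ⟨by fun_prop, Measure.map_infinitePi_infinitePi_of_inj (MulAction.injective s)⟩
  have hTs : μ (symmDiff (shift ⁻¹' T) T) = 0 := by simpa using hinv s⁻¹
  have hA_shift : shift ⁻¹' (e ⁻¹' A) =
      (fun x ↦ (fun i : F ↦ x i, fun j : t ↦ x (s • (j : I)))) ⁻¹' D := by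
    ext x
    simp [A, e, shift, hF s _ (Subtype.prop _)]
    rfl
  have hdefect : joiningDefect ν η A = μ (symmDiff (e ⁻¹' A) (shift ⁻¹' (e ⁻¹' A))) := by
    rw [joiningDefect_prodMap_restrict (MulAction.injective s) (hF s) (fun j hj k hk ↦
      hs _ (Finset.mem_image_of_mem _ hj) _ (Finset.mem_image_of_mem _ hk)) hD, hA_shift]
    rfl
  calc _ ≤ joiningDefect ν η A + 2 * (ν.prod η) (symmDiff (e.symm ⁻¹' T) A) :=
        joiningDefect_le (e.symm.measurable hT) hA
    _ ≤ 2 * μ (symmDiff T (e ⁻¹' A)) + 2 * (ν.prod η) (symmDiff (e.symm ⁻¹' T) A) := by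
        rw [hdefect]
        exact add_le_add_left (hshift.measure_symmDiff_preimage_le hT (e.measurable hA) hTs) _
    _ = 4 * (ν.prod η) (symmDiff (e.symm ⁻¹' T) A) := by
        rw [← he.measure_preimage ((e.symm.measurable hT).symmDiff hA).nullMeasurableSet,
          preimage_symmDiff, e.preimage_symm_preimage]
        ring

theorem joiningDefect_eq_zero_of_shift_invariant {S : Type*} [Group S] [MulAction S I]
    [DecidablePred (· ∈ F)] (hF : ∀ s : S, ∀ i ∈ F, s • i = i)
    (horb : ∀ i ∉ F, (MulAction.orbit S i).Infinite) {T : Set (I → X₀)} (hT : MeasurableSet T)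
    (hinv : ∀ s : S, Measure.infinitePi (fun _ : I ↦ μ₀)
      (symmDiff ((fun x : I → X₀ ↦ fun i : I ↦ x (s⁻¹ • i)) ⁻¹' T) T) = 0) :
    joiningDefect (Measure.infinitePi fun _ : F ↦ μ₀)
      (Measure.infinitePi fun _ : {i // i ∉ F} ↦ μ₀)
      ((MeasurableEquiv.piEquivPiSubtypeProd (fun _ : I ↦ X₀) (· ∈ F)).symm ⁻¹' T) = 0 := by
  refine (measureDense_finitarySets ((Measure.infinitePi fun _ : F ↦ μ₀).prod
    (Measure.infinitePi fun _ : {i // i ∉ F} ↦ μ₀))).eq_zero_of_le_mul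
    ((MeasurableEquiv.piEquivPiSubtypeProd _ _).symm.measurable hT) (c := 4) (by norm_num) ?_
  rintro _ ⟨t, D, hD, rfl⟩
  exact joiningDefect_le_of_shift_invariant hF horb hT hinv hD

end BernoulliShift

end MeasureTheory

theorem stmt5_general {S I X₀ : Type*} [Group S] [MulAction S I]
    [MeasurableSpace X₀]
    (μ₀ : Measure X₀) [IsProbabilityMeasure μ₀]
    (μ : Measure (I → X₀))
    (hμ : ∀ (s : Finset I) (f : I → Set X₀), (∀ i, MeasurableSet (f i)) →
      μ {x : I → X₀ | ∀ i ∈ s, x i ∈ f i} = ∏ i ∈ s, μ₀ (f i))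
    (F : Set I) (hF : F = {i : I | ∀ s : S, s • i = i})
    (horb : ∀ i ∉ F, (MulAction.orbit S i).Infinite)
    (T : Set (I → X₀)) (hT : MeasurableSet T)
    (hinv : ∀ s : S, μ (symmDiff ((fun x : I → X₀ => fun i : I => x (s⁻¹ • i)) ⁻¹' T) T) = 0) :
    ∃ B : Set (F → X₀), MeasurableSet B ∧
      μ (symmDiff T ((fun x : I → X₀ => fun i : F => x i) ⁻¹' B)) = 0 := by
  classical
  obtain rfl : μ = Measure.infinitePi fun _ ↦ μ₀ := Measure.eq_infinitePi _ hμ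
  have hfix : ∀ s : S, ∀ i ∈ F, s • i = i := fun s i hi ↦ by rw [hF] at hi; exact hi s
  set e := MeasurableEquiv.piEquivPiSubtypeProd (fun _ : I ↦ X₀) (· ∈ F)
  obtain ⟨B, hB, hTB⟩ := exists_measure_symmDiff_prod_univ_eq_zero_of_joiningDefect
    (e.symm.measurable hT) (joiningDefect_eq_zero_of_shift_invariant hfix horb hT hinv)
  refine ⟨B, hB, ?_⟩
  rw [← Measure.infinitePi_map_piEquivPiSubtypeProd (fun _ : I ↦ μ₀) (· ∈ F),
    Measure.map_apply e.measurable ((e.symm.measurable hT).symmDiff (hB.prod .univ)),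
    preimage_symmDiff, e.preimage_symm_preimage] at hTB
  convert hTB using 3
  ext x
  simp [e]

/-- Let a countable group `S` act on a countable set `I`, let `F` be the set of global
fixed points of the action, and assume every `S`-orbit outside `F` is infinite. If a
measurable subset `T` of `X₀^I` is invariant up to `μ`-null sets under all the shifts
`T_s x = fun i => x (s⁻¹ • i)`, where `μ = μ₀^{⊗ I}` is the product probability measure
(characterized by its values on measurable cylinder sets), then up to a `μ`-null set `T`
is the preimage of a measurable set `B ⊆ X₀^F` under the restriction map `x ↦ x|_F`. -/
theorem stmt5 {S I X₀ : Type*} [Group S] [MulAction S I] [Countable S] [Countable I]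
    [MeasurableSpace X₀] [StandardBorelSpace X₀]
    (μ₀ : Measure X₀) [IsProbabilityMeasure μ₀]
    (μ : Measure (I → X₀)) [IsProbabilityMeasure μ]
    (hμ : ∀ (s : Finset I) (f : I → Set X₀), (∀ i, MeasurableSet (f i)) →
      μ {x : I → X₀ | ∀ i ∈ s, x i ∈ f i} = ∏ i ∈ s, μ₀ (f i))
    (F : Set I) (hF : F = {i : I | ∀ s : S, s • i = i})
    (horb : ∀ i ∉ F, (MulAction.orbit S i).Infinite)
    (T : Set (I → X₀)) (hT : MeasurableSet T)
    (hinv : ∀ s : S, μ (symmDiff ((fun x : I → X₀ => fun i : I => x (s⁻¹ • i)) ⁻¹' T) T) = 0) :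
    ∃ B : Set (F → X₀), MeasurableSet B ∧
      μ (symmDiff T ((fun x : I → X₀ => fun i : F => x i) ⁻¹' B)) = 0 :=
  stmt5_general μ₀ μ hμ F hF horb T hT hinv
end

section
/- Let Γ be a group whose only abelian normal subgroup is the trivial subgroup. Let Σ and Σ' be abelian groups equipped with actions of Γ by group automorphisms, and form the semidirect products Λ = Σ ⋊ Γ and Λ' = Σ' ⋊ Γ. Then every group isomorphism λ : Λ → Λ' maps the canonical copy of Σ in Λ onto the canonical copy of Σ' in Λ'. -/
private lemma stmt8_aux {Γ : Type*} [Group Γ]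
    (hΓ : ∀ N : Subgroup Γ, N.Normal → (∀ x ∈ N, ∀ y ∈ N, x * y = y * x) → N = ⊥)
    {A A' : Type*} [CommGroup A] [CommGroup A']
    (β : Γ →* MulAut A) (β' : Γ →* MulAut A')
    (e : A ⋊[β] Γ ≃* A' ⋊[β'] Γ) :
    Subgroup.map e.toMonoidHom (SemidirectProduct.inl : A →* A ⋊[β] Γ).range
      ≤ (SemidirectProduct.inl : A' →* A' ⋊[β'] Γ).range := by
  set N := Subgroup.map e.toMonoidHom (SemidirectProduct.inl : A →* A ⋊[β] Γ).range with hN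
  have hNnorm : N.Normal := by
    rw [hN, SemidirectProduct.range_inl_eq_ker_rightHom]
    exact Subgroup.Normal.map (MonoidHom.normal_ker _) e.toMonoidHom e.surjective
  have hNab : ∀ x ∈ N, ∀ y ∈ N, x * y = y * x := by
    rintro x ⟨a, ⟨a0, rfl⟩, rfl⟩ y ⟨b, ⟨b0, rfl⟩, rfl⟩
    simp only [← map_mul, ← SemidirectProduct.inl.map_mul, mul_comm a0 b0]
  -- image of N in Γ is a normal abelian subgroup, hence trivial
  have hmap : Subgroup.map (SemidirectProduct.rightHom :
      A' ⋊[β'] Γ →* Γ) N = ⊥ := by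
    apply hΓ
    · exact Subgroup.Normal.map hNnorm _ SemidirectProduct.rightHom_surjective
    · rintro x ⟨a, ha, rfl⟩ y ⟨b, hb, rfl⟩
      rw [← map_mul, ← map_mul, hNab a ha b hb]
  intro x hx
  rw [SemidirectProduct.range_inl_eq_ker_rightHom, MonoidHom.mem_ker]
  have : SemidirectProduct.rightHom x ∈ Subgroup.map
      (SemidirectProduct.rightHom : A' ⋊[β'] Γ →* Γ) N := ⟨x, hx, rfl⟩
  rwa [hmap, Subgroup.mem_bot] at this

/-- If `Γ` is a group whose only abelian normal subgroup is trivial, then any isomorphism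
between two semidirect products `A ⋊ Γ` and `A' ⋊ Γ` of abelian groups by `Γ` maps the
canonical copy of `A` onto the canonical copy of `A'`. -/
theorem stmt8 {Γ : Type*} [Group Γ]
    (hΓ : ∀ N : Subgroup Γ, N.Normal → (∀ x ∈ N, ∀ y ∈ N, x * y = y * x) → N = ⊥)
    {A A' : Type*} [CommGroup A] [CommGroup A']
    (β : Γ →* MulAut A) (β' : Γ →* MulAut A')
    (e : A ⋊[β] Γ ≃* A' ⋊[β'] Γ) :
    Subgroup.map e.toMonoidHom (SemidirectProduct.inl : A →* A ⋊[β] Γ).range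
      = (SemidirectProduct.inl : A' →* A' ⋊[β'] Γ).range := by
  refine le_antisymm (stmt8_aux hΓ β β' e) ?_
  have h := stmt8_aux hΓ β' β e.symm
  intro x hx
  have hx' : e.symm x ∈ (SemidirectProduct.inl : A →* A ⋊[β] Γ).range :=
    h ⟨x, hx, rfl⟩
  exact ⟨e.symm x, hx', e.apply_symm_apply x⟩
end

section
/- Let A be a subgroup of the additive group (ℚ, +), let M be an abelian group with no ℤ-torsion (i.e., n·m = 0 with n a non-zero integer implies m = 0), let I' be a set, and let φ : A → ⊕_{i ∈ I'} M be a homomorphism of additive groups into the group of finitely supported M-valued functions on I'. If there exist x ∈ A with x ≠ 0 and a finite set F ⊆ I' such that the support of φ(x) is contained in F, then the support of φ(y) is contained in F for every y ∈ A. -/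
/-- Let `A` be a subgroup of `(ℚ, +)`, `M` an abelian group without `ℤ`-torsion, and
`φ : A → ⊕_{i ∈ I'} M` an additive homomorphism into the finitely supported `M`-valued
functions on `I'`. If for some non-zero `x ∈ A` the support of `φ x` is contained in a
finite set `F`, then the support of `φ y` is contained in `F` for every `y ∈ A`. -/
theorem stmt11 {M I' : Type*} [AddCommGroup M]
    (hM : ∀ (n : ℤ) (m : M), n ≠ 0 → n • m = 0 → m = 0)
    (A : AddSubgroup ℚ) (φ : A →+ (I' →₀ M)) (F : Finset I')
    (hx : ∃ x : A, (x : ℚ) ≠ 0 ∧ ∀ i : I', i ∉ F → φ x i = 0) :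
    ∀ y : A, ∀ i : I', i ∉ F → φ y i = 0 := by
  obtain ⟨x, hx0, hxF⟩ := hx
  intro y i hi
  set n : ℤ := (x : ℚ).num * (y : ℚ).den with hn
  set m : ℤ := (y : ℚ).num * (x : ℚ).den with hm
  have hn0 : n ≠ 0 := by
    apply mul_ne_zero
    · exact Rat.num_ne_zero.mpr hx0
    · exact_mod_cast (y : ℚ).den_nz
  have key : (n • y : A) = m • x := by
    apply Subtype.ext
    push_cast [zsmul_eq_mul]
    rw [hn, hm]
    push_cast
    rw [mul_assoc, Rat.den_mul_eq_num, mul_assoc, Rat.den_mul_eq_num, mul_comm]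
  have : n • (φ y i) = 0 := by
    have := congrArg (fun f : I' →₀ M => f i)
      (by rw [← map_zsmul, ← map_zsmul, key] : n • φ y = m • φ x)
    simp only [Finsupp.coe_smul, Pi.smul_apply] at this
    rw [this, hxF i hi, smul_zero]
  exact hM n _ hn0 this
end
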